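/- arXiv:2112.01610 — 2 statements merged into one kernel-verified Lean document; each statement's English description precedes it below -/
import Mathlib

section
/- Let f : [0,1] → ℝ and suppose estimates g_i ∈ [0,1) satisfy d_w(g_i, f(i/n) mod 1) ≤ ε for all i ∈ {1,…,n}, where d_w is the wrap-around metric. Suppose furthermore |f(x) − f(y)| ≤ L|x−y|^γ for some γ ∈ (0,1] and 4ε + 2L n^{−γ} < 1. Define f̃_1 = g_1 and recursively f̃_i = f̃_{i−1} + d_i if |d_i| < 1/2, f̃_i = f̃_{i−1} + 1 + d_i if d_i < −1/2, f̃_i = f̃_{i−1} − 1 + d_i if d_i > 1/2, where d_i = g_i − g_{i−1}. Then there exists an integer q* such that |f̃_i + q* − f(i/n)| ≤ ε for all i ∈ {1,…,n}. -/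
open Real

/-!
Choose integers `t i` with `|g i + t i - f (i/n)| ≤ ε`. The Hölder bound and the gap condition
make the lifted jump `(g (i+1) - g i) + (t (i+1) - t i)` smaller than `1/2` in absolute value,
and since `|g (i+1) - g i| < 1` the unwrapping rule adds exactly that integer `t (i+1) - t i`.
Telescoping gives `ft i = g i + t i - t 1`, so `q = t 1` works.
-/

/-- The wrap-around distance `d_w` on `[0, 1)`. -/
noncomputable def wrapDist (a b : ℝ) : ℝ := min |a - b| (1 - |a - b|)

/-- The increment added by the unwrapping rule to the jump `d = g i - g (i - 1)`. -/
noncomputable def unwrapStep (d : ℝ) : ℝ :=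
  if |d| < 1 / 2 then d else if d < -(1 / 2) then 1 + d else -1 + d

lemma exists_int_abs_add_sub_le_of_wrapDist_fract_le {a y ε : ℝ} (ha : a ∈ Set.Ico (0 : ℝ) 1)
    (h : wrapDist a (Int.fract y) ≤ ε) : ∃ t : ℤ, |a + t - y| ≤ ε := by
  have hfract : Int.fract y = y - ⌊y⌋ := rfl
  have hfract0 := Int.fract_nonneg y
  have hfract1 := Int.fract_lt_one y
  obtain ⟨ha0, ha1⟩ := ha
  rcases min_le_iff.mp h with h | h
  · exact ⟨⌊y⌋, by rwa [hfract, sub_sub_eq_add_sub] at h⟩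
  · rcases le_total 0 (a - Int.fract y) with hpos | hneg
    · rw [abs_of_nonneg hpos] at h
      refine ⟨⌊y⌋ - 1, ?_⟩
      rw [abs_le]; push_cast; constructor <;> linarith
    · rw [abs_of_nonpos hneg] at h
      refine ⟨⌊y⌋ + 1, ?_⟩
      rw [abs_le]; push_cast; constructor <;> linarith

lemma unwrapStep_eq_add_intCast {d : ℝ} {j : ℤ} (hd : |d| < 1) (hj : |d + j| < 1 / 2) :
    unwrapStep d = d + j := by
  rw [abs_lt] at hd hj
  have hj_lo : (-2 : ℤ) < j := by exact_mod_cast (by linarith : (-2 : ℝ) < j)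
  have hj_hi : j < 2 := by exact_mod_cast (by linarith : (j : ℝ) < 2)
  obtain rfl | rfl | rfl : j = -1 ∨ j = 0 ∨ j = 1 := by omega
  all_goals
    push_cast at hj ⊢
    unfold unwrapStep
    split_ifs with h1 h2 <;> simp only [abs_lt, not_and_or, not_lt] at h1 <;> grind

lemma abs_sub_add_sub_le_of_abs_le {a b s t x y ε δ : ℝ} (ha : |a + s - x| ≤ ε)
    (hb : |b + t - y| ≤ ε) (hxy : |x - y| ≤ δ) : |a - b + (s - t)| ≤ 2 * ε + δ := by
  rw [abs_le] at *
  constructor <;> linarith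

lemma abs_sub_succ_div_le_of_holder {f : ℝ → ℝ} {L γ : ℝ} {n i : ℕ}
    (hHolder : ∀ x ∈ Set.Icc (0 : ℝ) 1, ∀ y ∈ Set.Icc (0 : ℝ) 1, |f x - f y| ≤ L * |x - y| ^ γ)
    (hi : i + 1 ≤ n) : |f ((↑(i + 1) : ℝ) / n) - f ((i : ℝ) / n)| ≤ L * (n : ℝ) ^ (-γ) := by
  have hn : (0 : ℝ) < n := by exact_mod_cast (by omega : 0 < n)
  have hmem : ∀ k : ℕ, k ≤ n → (k : ℝ) / n ∈ Set.Icc (0 : ℝ) 1 := fun k hk =>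
    ⟨by positivity, (div_le_one hn).mpr (by exact_mod_cast hk)⟩
  have hgrid : |(↑(i + 1) : ℝ) / n - (i : ℝ) / n| = (n : ℝ)⁻¹ := by
    rw [← sub_div, Nat.cast_succ, add_sub_cancel_left, one_div, abs_of_pos (inv_pos.mpr hn)]
  simpa only [hgrid, inv_rpow hn.le, ← rpow_neg hn.le] using
    hHolder _ (hmem _ hi) _ (hmem i (by omega))

lemma sub_eq_sub_of_forall_succ_sub_eq {u v : ℕ → ℝ} {a n : ℕ}
    (h : ∀ i, a ≤ i → i + 1 ≤ n → u (i + 1) - u i = v (i + 1) - v i) :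
    ∀ i, a ≤ i → i ≤ n → u i - u a = v i - v a := by
  intro i hai
  induction i, hai using Nat.le_induction with
  | base => simp
  | succ i hai ih =>
    intro hi
    linarith [ih (by omega), h i hai hi]

theorem sequential_unwrapping_correct_general (n : ℕ) (f : ℝ → ℝ)
    (g : ℕ → ℝ) (ε L γ : ℝ)
    (hg_mem : ∀ i ∈ Finset.Icc 1 n, g i ∈ Set.Ico (0:ℝ) 1)
    (hg_close : ∀ i ∈ Finset.Icc 1 n,
      min |g i - Int.fract (f ((i : ℝ) / n))| (1 - |g i - Int.fract (f ((i : ℝ) / n))|) ≤ ε)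
    (hHolder : ∀ x ∈ Set.Icc (0:ℝ) 1, ∀ y ∈ Set.Icc (0:ℝ) 1,
      |f x - f y| ≤ L * |x - y| ^ γ)
    (hgap : 4 * ε + 2 * L * (n : ℝ) ^ (-γ) < 1)
    (ft : ℕ → ℝ) (hft1 : ft 1 = g 1)
    (hft : ∀ i, 2 ≤ i → i ≤ n →
      ft i = ft (i - 1) +
        (if |g i - g (i - 1)| < 1 / 2 then g i - g (i - 1)
         else if g i - g (i - 1) < -(1 / 2) then 1 + (g i - g (i - 1))
         else -1 + (g i - g (i - 1)))) :
    ∃ q : ℤ, ∀ i ∈ Finset.Icc 1 n, |ft i + q - f ((i : ℝ) / n)| ≤ ε := by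
  choose! t ht using fun i hi =>
    exists_int_abs_add_sub_le_of_wrapDist_fract_le (hg_mem i hi) (hg_close i hi)
  have hstep : ∀ i, 1 ≤ i → i + 1 ≤ n →
      ft (i + 1) - ft i = (g (i + 1) + t (i + 1)) - (g i + t i) := by
    intro i hi hin
    have hi_mem : i ∈ Finset.Icc 1 n := Finset.mem_Icc.mpr ⟨hi, by omega⟩
    have hi1_mem : i + 1 ∈ Finset.Icc 1 n := Finset.mem_Icc.mpr ⟨by omega, hin⟩
    have hjump : |g (i + 1) - g i| < 1 := by
      obtain ⟨hg0, hg1⟩ := hg_mem i hi_mem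
      obtain ⟨hg0', hg1'⟩ := hg_mem (i + 1) hi1_mem
      rw [abs_lt]; constructor <;> linarith
    have hlift : |g (i + 1) - g i + ((t (i + 1) - t i : ℤ) : ℝ)| < 1 / 2 := by
      push_cast
      linarith [abs_sub_add_sub_le_of_abs_le (ht _ hi1_mem) (ht i hi_mem)
        (abs_sub_succ_div_le_of_holder hHolder hin)]
    have hrec : ft (i + 1) = ft i + unwrapStep (g (i + 1) - g i) := hft (i + 1) (by omega) hin
    rw [hrec, unwrapStep_eq_add_intCast hjump hlift]
    push_cast
    ring
  refine ⟨t 1, fun i hi => ?_⟩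
  obtain ⟨hi1, hin⟩ := Finset.mem_Icc.mp hi
  have hft_eq := sub_eq_sub_of_forall_succ_sub_eq (v := fun i => g i + t i) hstep i hi1 hin
  convert ht i hi using 2
  linarith

/-- Correctness of the sequential unwrapping procedure: if modulo-1 estimates `g i` are
`ε`-accurate in the wrap-around metric and `f` is Hölder with the gap condition
`4ε + 2L n^{-γ} < 1`, then the unwrapped values `f̃ i` recover `f(i/n)` up to one global
integer shift with uniform accuracy `ε`. -/
theorem sequential_unwrapping_correct (n : ℕ) (hn : 1 ≤ n) (f : ℝ → ℝ)
    (g : ℕ → ℝ) (ε L γ : ℝ) (hε : 0 ≤ ε) (hL : 0 < L) (hγ : γ ∈ Set.Ioc (0:ℝ) 1)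
    (hg_mem : ∀ i ∈ Finset.Icc 1 n, g i ∈ Set.Ico (0:ℝ) 1)
    (hg_close : ∀ i ∈ Finset.Icc 1 n,
      min |g i - Int.fract (f ((i : ℝ) / n))| (1 - |g i - Int.fract (f ((i : ℝ) / n))|) ≤ ε)
    (hHolder : ∀ x ∈ Set.Icc (0:ℝ) 1, ∀ y ∈ Set.Icc (0:ℝ) 1,
      |f x - f y| ≤ L * |x - y| ^ γ)
    (hgap : 4 * ε + 2 * L * (n : ℝ) ^ (-γ) < 1)
    (ft : ℕ → ℝ) (hft1 : ft 1 = g 1)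
    (hft : ∀ i, 2 ≤ i → i ≤ n →
      ft i = ft (i - 1) +
        (if |g i - g (i - 1)| < 1 / 2 then g i - g (i - 1)
         else if g i - g (i - 1) < -(1 / 2) then 1 + (g i - g (i - 1))
         else -1 + (g i - g (i - 1)))) :
    ∃ q : ℤ, ∀ i ∈ Finset.Icc 1 n, |ft i + q - f ((i : ℝ) / n)| ≤ ε :=
  sequential_unwrapping_correct_general n f g ε L γ hg_mem hg_close hHolder hgap ft hft1 hft
end

section
/- Let K : ℝ → ℝ be a kernel satisfying K(u) ≥ K_min·1_{|u|≤Δ} for all u ∈ ℝ with K_min, Δ > 0, and for x ∈ [0,1], b > 0, n ∈ ℕ define B_{nx} = (1/(nb)) Σ_{i=1}^n U((x_i−x)/b) U((x_i−x)/b)^T K((x_i−x)/b) where U(u) = (1, u, u²/2!, …, u^l/l!)^T and x_i = i/n. If b_n → 0 and n b_n → ∞, then there exist λ₀ > 0 and n₀ such that λ_min(B_{nx}) ≥ λ₀ for all n ≥ n₀ and all x ∈ [0,1]. -/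
/-!
Write `p_v(u) = ∑ₖ vₖ uᵏ / k!`, so that `v ⬝ᵥ B v = (nb)⁻¹ ∑ᵢ K(uᵢ) p_v(uᵢ)²` on the grid
`uᵢ = (i/n - x)/b` of mesh `h = 1/(nb)`. Put `δ = Δ / (2(l+1))`. For large `n` there is a step
`M` with `Mh ∈ [δ, 2δ]` and a block of `M(l+1)` consecutive indices in `[1, n]` whose grid points
lie in `[-Δ, Δ]`, where `K ≥ K_min`. The block splits into `M` arithmetic progressions
`s, s + Mh, …, s + l·Mh`, and on each of them `∑ⱼ p_v(s + j·Mh)² ≥ c ‖v‖²`: by compactness of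
`[-Δ, Δ] × [δ, 2δ] × sphere`, since a nonzero polynomial of degree `≤ l` cannot vanish at `l + 1`
distinct points (the Vandermonde determinant). Hence
`v ⬝ᵥ B v ≥ K_min · h · M · c ‖v‖² ≥ K_min δ c ‖v‖²`, and `v ⬝ᵥ v ≤ (l + 1) ‖v‖²` for the sup norm.
-/

open Matrix

namespace LocalPolynomial

open Finset
open scoped Nat

theorem dotProduct_smul_sum_vecMulVec_self_mulVec {ι n : Type*} [Fintype n] (s : Finset ι)
    (c : ℝ) (g : ι → ℝ) (w : ι → n → ℝ) (v : n → ℝ) :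
    v ⬝ᵥ ((c • ∑ i ∈ s, g i • vecMulVec (w i) (w i)) *ᵥ v) = c * ∑ i ∈ s, g i * (w i ⬝ᵥ v) ^ 2 := by
  simp [smul_mulVec, sum_mulVec, vecMulVec_mulVec, sum_dotProduct, smul_dotProduct,
    dotProduct_comm v, sq]

theorem dotProduct_self_le_card_mul_norm_sq {n : Type*} [Fintype n] (v : n → ℝ) :
    v ⬝ᵥ v ≤ Fintype.card n * ‖v‖ ^ 2 := by
  rw [dotProduct, ← nsmul_eq_mul, ← card_univ, ← sum_const]
  refine sum_le_sum fun i _ => ?_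
  rw [← sq, ← sq_abs, ← Real.norm_eq_abs]
  exact pow_le_pow_left₀ (norm_nonneg _) (norm_le_pi_norm v i) 2

theorem exists_pos_mul_norm_sq_le {X E : Type*} [TopologicalSpace X] [NormedAddCommGroup E]
    [NormedSpace ℝ E] [ProperSpace E] {f : X → E → ℝ} (hf : Continuous (Function.uncurry f))
    (hsmul : ∀ x (c : ℝ) v, f x (c • v) = c ^ 2 * f x v) {S : Set X} (hS : IsCompact S)
    (hpos : ∀ x ∈ S, ∀ v ≠ 0, 0 < f x v) :
    ∃ c > 0, ∀ x ∈ S, ∀ v, c * ‖v‖ ^ 2 ≤ f x v := by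
  obtain ⟨c, hc, hmin⟩ := (hS.prod (isCompact_sphere (0 : E) 1)).exists_forall_le'
    hf.continuousOn (a := 0) fun p hp => hpos p.1 hp.1 p.2 (ne_zero_of_mem_unit_sphere ⟨p.2, hp.2⟩)
  refine ⟨c, hc, fun x hx v => ?_⟩
  rcases eq_or_ne v 0 with rfl | hv
  · simpa using (hsmul x 0 0).ge
  · have hnv : ‖v‖ ≠ 0 := norm_ne_zero_iff.2 hv
    have hunit : ‖v‖⁻¹ • v ∈ Metric.sphere (0 : E) 1 := by simp [norm_smul, hnv]
    calc c * ‖v‖ ^ 2 ≤ ‖v‖ ^ 2 * f x (‖v‖⁻¹ • v) := by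
          rw [mul_comm]; exact mul_le_mul_of_nonneg_left (hmin (x, _) ⟨hx, hunit⟩) (sq_nonneg _)
      _ = f x v := by rw [← hsmul, smul_smul, mul_inv_cancel₀ hnv, one_smul]

theorem sum_range_mul_eq_sum_sum {M : Type*} [AddCommMonoid M] (f : ℕ → M) (m L : ℕ) :
    ∑ i ∈ range (m * L), f i = ∑ k ∈ range m, ∑ j ∈ range L, f (k + j * m) := by
  induction L with
  | zero => simp
  | succ L ih =>
    simp only [Nat.mul_succ, sum_range_add, ih, sum_range_succ, sum_add_distrib]
    simp only [add_comm, mul_comm]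

theorem exists_nat_mul_mem_Icc {h δ : ℝ} (hh : 0 < h) (hhδ : h ≤ δ) :
    ∃ M : ℕ, δ ≤ M * h ∧ M * h ≤ 2 * δ := by
  refine ⟨⌈δ / h⌉₊, (div_le_iff₀ hh).1 (Nat.le_ceil _), ?_⟩
  have := Nat.ceil_lt_add_one (div_nonneg (hh.le.trans hhδ) hh.le)
  have := (lt_div_iff₀ hh).1 (by linarith : (⌈δ / h⌉₊ : ℝ) - 1 < δ / h)
  nlinarith

theorem exists_Ico_subset_Icc_abs_sub_le {y : ℝ} {n L : ℕ} (hy : y ∈ Set.Icc 0 (n : ℝ))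
    (hL : L ≤ n) :
    ∃ i₀ : ℕ, Ico i₀ (i₀ + L) ⊆ Icc 1 n ∧ ∀ i ∈ Ico i₀ (i₀ + L), |(i : ℝ) - y| ≤ L := by
  refine ⟨min ⌊y⌋₊ (n - L) + 1, fun i hi => ?_, fun i hi => ?_⟩
  · simp only [mem_Ico, mem_Icc] at hi ⊢; omega
  · rw [mem_Ico] at hi
    have hfl := Nat.floor_le hy.1
    have hlt := Nat.lt_floor_add_one y
    have hupper : (i : ℝ) ≤ ⌊y⌋₊ + L := by exact_mod_cast (by omega : i ≤ ⌊y⌋₊ + L)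
    rcases min_cases ⌊y⌋₊ (n - L) with ⟨hmin, -⟩ | ⟨hmin, -⟩
    · have : (⌊y⌋₊ : ℝ) + 1 ≤ i := by exact_mod_cast (by omega : ⌊y⌋₊ + 1 ≤ i)
      rw [abs_le]; constructor <;> linarith
    · have : (n : ℝ) - L + 1 ≤ i := by
        have : n - L + 1 ≤ i := by omega
        rw [← Nat.cast_sub hL]; exact_mod_cast this
      rw [abs_le]; constructor <;> linarith [hy.2]

noncomputable def taylorVec (l : ℕ) (u : ℝ) : Fin (l + 1) → ℝ := fun k => u ^ (k : ℕ) / (k : ℕ)!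

theorem taylorVec_dotProduct_eq_vandermonde_mulVec {l : ℕ} (t : Fin (l + 1) → ℝ)
    (v : Fin (l + 1) → ℝ) (j : Fin (l + 1)) :
    taylorVec l (t j) ⬝ᵥ v = (vandermonde t *ᵥ fun k => v k / (k : ℕ)!) j := by
  simp only [taylorVec, dotProduct, mulVec, vandermonde_apply]
  exact sum_congr rfl fun k _ => by ring

theorem sum_sq_taylorVec_dotProduct_pos {l : ℕ} {t : Fin (l + 1) → ℝ} (ht : Function.Injective t)
    {v : Fin (l + 1) → ℝ} (hv : v ≠ 0) : 0 < ∑ j, (taylorVec l (t j) ⬝ᵥ v) ^ 2 := by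
  have hw : (fun k : Fin (l + 1) => v k / (k : ℕ)!) ≠ 0 := fun h => hv <| funext fun k => by
    simpa [(Nat.factorial_pos _).ne'] using congrFun h k
  obtain ⟨j, hj⟩ : ∃ j, (vandermonde t *ᵥ fun k => v k / (k : ℕ)!) j ≠ 0 := by
    by_contra! h
    exact hw (eq_zero_of_mulVec_eq_zero (det_vandermonde_ne_zero_iff.2 ht) (funext h))
  rw [← taylorVec_dotProduct_eq_vandermonde_mulVec] at hj
  exact sum_pos' (fun _ _ => sq_nonneg _) ⟨j, mem_univ _, by positivity⟩

noncomputable def progressionForm (l : ℕ) (p : ℝ × ℝ) (v : Fin (l + 1) → ℝ) : ℝ :=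
  ∑ j : Fin (l + 1), (taylorVec l (p.1 + j * p.2) ⬝ᵥ v) ^ 2

theorem continuous_progressionForm (l : ℕ) :
    Continuous (Function.uncurry (progressionForm l)) := by
  unfold progressionForm taylorVec dotProduct
  fun_prop

theorem progressionForm_smul (l : ℕ) (p : ℝ × ℝ) (c : ℝ) (v : Fin (l + 1) → ℝ) :
    progressionForm l p (c • v) = c ^ 2 * progressionForm l p v := by
  simp only [progressionForm, dotProduct_smul, smul_eq_mul, mul_pow, mul_sum]

theorem progressionForm_pos {l : ℕ} {p : ℝ × ℝ} (hp : p.2 ≠ 0) {v : Fin (l + 1) → ℝ} (hv : v ≠ 0) :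
    0 < progressionForm l p v :=
  sum_sq_taylorVec_dotProduct_pos (fun _ _ hij => Fin.ext <| Nat.cast_injective <|
    mul_right_cancel₀ hp (add_left_cancel hij)) hv

theorem sum_range_taylorVec_eq_sum_progressionForm (l m : ℕ) (s h : ℝ) (v : Fin (l + 1) → ℝ) :
    ∑ i ∈ range (m * (l + 1)), (taylorVec l (s + i * h) ⬝ᵥ v) ^ 2 =
      ∑ k ∈ range m, progressionForm l (s + k * h, m * h) v := by
  rw [sum_range_mul_eq_sum_sum]
  refine sum_congr rfl fun k _ => ?_
  rw [progressionForm,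
    Fin.sum_univ_eq_sum_range (fun j => (taylorVec l (s + k * h + j * (m * h)) ⬝ᵥ v) ^ 2)]
  refine sum_congr rfl fun j _ => ?_
  push_cast
  ring_nf

noncomputable def designMatrix (l : ℕ) (K : ℝ → ℝ) (n : ℕ) (β x : ℝ) :
    Matrix (Fin (l + 1)) (Fin (l + 1)) ℝ :=
  (1 / (n * β)) • ∑ i ∈ Icc 1 n, K (((i : ℝ) / n - x) / β) •
    vecMulVec (taylorVec l (((i : ℝ) / n - x) / β)) (taylorVec l (((i : ℝ) / n - x) / β))

theorem dotProduct_designMatrix_mulVec (l : ℕ) (K : ℝ → ℝ) (n : ℕ) (β x : ℝ)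
    (v : Fin (l + 1) → ℝ) :
    v ⬝ᵥ (designMatrix l K n β x *ᵥ v) = 1 / (n * β) *
      ∑ i ∈ Icc 1 n, K (((i : ℝ) / n - x) / β) * (taylorVec l (((i : ℝ) / n - x) / β) ⬝ᵥ v) ^ 2 :=
  dotProduct_smul_sum_vecMulVec_self_mulVec _ _ _ _ v

theorem mul_sum_block_le_sum_mul {K q : ℝ → ℝ} {u : ℕ → ℝ} {Kmin Δ : ℝ} (hK0 : ∀ t, 0 ≤ K t)
    (hKΔ : ∀ t, |t| ≤ Δ → Kmin ≤ K t) (hq : ∀ t, 0 ≤ q t) {s : Finset ℕ} {i₀ L : ℕ}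
    (hsub : Ico i₀ (i₀ + L) ⊆ s) (hu : ∀ i ∈ Ico i₀ (i₀ + L), |u i| ≤ Δ) :
    Kmin * ∑ m ∈ range L, q (u (i₀ + m)) ≤ ∑ i ∈ s, K (u i) * q (u i) :=
  calc Kmin * ∑ m ∈ range L, q (u (i₀ + m)) = ∑ i ∈ Ico i₀ (i₀ + L), Kmin * q (u i) := by
        rw [sum_Ico_eq_sum_range, Nat.add_sub_cancel_left, mul_sum]
    _ ≤ ∑ i ∈ Ico i₀ (i₀ + L), K (u i) * q (u i) :=
        sum_le_sum fun i hi => mul_le_mul_of_nonneg_right (hKΔ _ (hu i hi)) (hq _)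
    _ ≤ ∑ i ∈ s, K (u i) * q (u i) :=
        sum_le_sum_of_subset_of_nonneg hsub fun _ _ _ => mul_nonneg (hK0 _) (hq _)

theorem exists_design_window {l n : ℕ} {Δ δ β x : ℝ} (hδ : 0 < δ) (hδΔ : 2 * δ * (l + 1) ≤ Δ)
    (hnβ : 1 / δ ≤ n * β) (hβΔ : Δ * β ≤ 1) (hx : x ∈ Set.Icc 0 1) :
    ∃ M i₀ : ℕ, δ ≤ M * (1 / (n * β)) ∧ M * (1 / (n * β)) ≤ 2 * δ ∧
      Ico i₀ (i₀ + M * (l + 1)) ⊆ Icc 1 n ∧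
      ∀ i ∈ Ico i₀ (i₀ + M * (l + 1)), |((i : ℝ) / n - x) / β| ≤ Δ := by
  have hnβ0 : 0 < n * β := (one_div_pos.2 hδ).trans_le hnβ
  have hn0 : (n : ℝ) ≠ 0 := by rintro h; simp [h] at hnβ0
  set h := 1 / (n * β) with hh
  have hh0 : 0 < h := one_div_pos.2 hnβ0
  have hhδ : h ≤ δ := by
    rw [hh, div_le_iff₀ hnβ0]; rwa [div_le_iff₀ hδ, mul_comm] at hnβ
  obtain ⟨M, hMlo, hMhi⟩ := exists_nat_mul_mem_Icc hh0 hhδ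
  set L := M * (l + 1)
  have hLh : (L : ℝ) * h ≤ Δ := by push_cast [L]; nlinarith
  have hLn : L ≤ n := by
    have : (L : ℝ) ≤ Δ * (n * β) := by rwa [hh, mul_one_div, div_le_iff₀ hnβ0] at hLh
    have hΔn : Δ * (n * β) ≤ n := by nlinarith [mul_le_mul_of_nonneg_left hβΔ n.cast_nonneg]
    exact_mod_cast this.trans hΔn
  obtain ⟨i₀, hsub, hnear⟩ := exists_Ico_subset_Icc_abs_sub_le (y := n * x)
    ⟨by nlinarith [hx.1, n.cast_nonneg (α := ℝ)], by nlinarith [hx.2, n.cast_nonneg (α := ℝ)]⟩ hLn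
  refine ⟨M, i₀, hMlo, hMhi, hsub, fun i hi => ?_⟩
  rw [show ((i : ℝ) / n - x) / β = ((i : ℝ) - n * x) * h by rw [hh]; field_simp, abs_mul,
    abs_of_pos hh0]
  exact (mul_le_mul_of_nonneg_right (hnear i hi) hh0.le).trans hLh

theorem mul_norm_sq_le_dotProduct_designMatrix_mulVec {l n : ℕ} {K : ℝ → ℝ}
    {Kmin Δ δ c β x : ℝ} (hK0 : ∀ u, 0 ≤ K u) (hKΔ : ∀ u, |u| ≤ Δ → Kmin ≤ K u)
    (hKmin : 0 ≤ Kmin) (hδ : 0 < δ) (hδΔ : 2 * δ * (l + 1) ≤ Δ) (hnβ : 1 / δ ≤ n * β)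
    (hβΔ : Δ * β ≤ 1) (hx : x ∈ Set.Icc 0 1) (hc0 : 0 ≤ c)
    (hc : ∀ p ∈ Set.Icc (-Δ) Δ ×ˢ Set.Icc δ (2 * δ), ∀ v, c * ‖v‖ ^ 2 ≤ progressionForm l p v)
    (v : Fin (l + 1) → ℝ) :
    Kmin * δ * c * ‖v‖ ^ 2 ≤ v ⬝ᵥ (designMatrix l K n β x *ᵥ v) := by
  obtain ⟨M, i₀, hMlo, hMhi, hsub, hsmall⟩ := exists_design_window hδ hδΔ hnβ hβΔ hx
  set h := 1 / (n * β)
  have hh0 : 0 ≤ h := (one_div_pos.2 ((one_div_pos.2 hδ).trans_le hnβ)).le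
  set s := ((i₀ : ℝ) / n - x) / β
  have hshift : ∀ m : ℕ, (((i₀ + m : ℕ) : ℝ) / n - x) / β = s + m * h := by
    intro m; push_cast; ring
  have hprog : ∀ k ∈ range M, c * ‖v‖ ^ 2 ≤ progressionForm l (s + k * h, M * h) v := by
    intro k hk
    have hML : M ≤ M * (l + 1) := Nat.le_mul_of_pos_right M l.succ_pos
    have hk : i₀ + k ∈ Ico i₀ (i₀ + M * (l + 1)) :=
      mem_Ico.2 ⟨by omega, by have := mem_range.1 hk; omega⟩
    refine hc _ ⟨abs_le.1 ?_, hMlo, hMhi⟩ v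
    simpa only [hshift] using hsmall _ hk
  calc Kmin * δ * c * ‖v‖ ^ 2 ≤ h * (Kmin * (M * (c * ‖v‖ ^ 2))) := by
        rw [show h * (Kmin * (M * (c * ‖v‖ ^ 2))) = Kmin * (M * h) * c * ‖v‖ ^ 2 by ring]
        gcongr
    _ ≤ h * (Kmin * ∑ k ∈ range M, progressionForm l (s + k * h, M * h) v) := by
        gcongr
        simpa using card_nsmul_le_sum _ _ _ hprog
    _ = h * (Kmin * ∑ m ∈ range (M * (l + 1)), (taylorVec l (s + m * h) ⬝ᵥ v) ^ 2) := by
        rw [sum_range_taylorVec_eq_sum_progressionForm]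
    _ ≤ v ⬝ᵥ (designMatrix l K n β x *ᵥ v) := by
        rw [dotProduct_designMatrix_mulVec]
        gcongr
        have := mul_sum_block_le_sum_mul (u := fun i : ℕ => ((i : ℝ) / n - x) / β)
          (q := fun t => (taylorVec l t ⬝ᵥ v) ^ 2) hK0 hKΔ (fun _ => sq_nonneg _) hsub hsmall
        simpa only [hshift] using this

end LocalPolynomial

open LocalPolynomial

theorem design_matrix_min_eigenvalue_general (l : ℕ) (K : ℝ → ℝ) (Kmin Δ : ℝ)
    (hKmin : 0 < Kmin) (hΔ : 0 < Δ)
    (hK : ∀ u : ℝ, Kmin * (if |u| ≤ Δ then 1 else 0) ≤ K u)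
    (b : ℕ → ℝ)
    (hb0 : Filter.Tendsto b Filter.atTop (nhds 0))
    (hnb : Filter.Tendsto (fun n : ℕ => (n : ℝ) * b n) Filter.atTop Filter.atTop) :
    ∃ lam0 > 0, ∃ n0 : ℕ, ∀ n ≥ n0, ∀ x ∈ Set.Icc (0:ℝ) 1,
      ∀ v : Fin (l + 1) → ℝ,
        lam0 * (v ⬝ᵥ v) ≤
          v ⬝ᵥ (((1 / ((n : ℝ) * b n)) •
            ∑ i ∈ Finset.Icc 1 n,
              K (((i : ℝ) / n - x) / b n) •
                Matrix.vecMulVec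
                  (fun k : Fin (l + 1) => (((i : ℝ) / n - x) / b n) ^ (k : ℕ) / (Nat.factorial k))
                  (fun k : Fin (l + 1) => (((i : ℝ) / n - x) / b n) ^ (k : ℕ) / (Nat.factorial k))
            : Matrix (Fin (l + 1)) (Fin (l + 1)) ℝ).mulVec v) := by
  set δ := Δ / (2 * (l + 1)) with hδ_def
  have hδ : 0 < δ := by positivity
  have hδΔ : 2 * δ * (l + 1) ≤ Δ := (by rw [hδ_def]; field_simp : 2 * δ * (l + 1) = Δ).le
  obtain ⟨c, hc, hcS⟩ := exists_pos_mul_norm_sq_le (continuous_progressionForm l)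
    (progressionForm_smul l) (isCompact_Icc.prod isCompact_Icc)
    fun p hp _ hv => progressionForm_pos (hδ.trans_le hp.2.1).ne' hv
  have hK0 : ∀ u, 0 ≤ K u := fun u =>
    (mul_nonneg hKmin.le (by split_ifs <;> norm_num)).trans (hK u)
  have hKΔ : ∀ u, |u| ≤ Δ → Kmin ≤ K u := fun u hu => by simpa [hu] using hK u
  obtain ⟨n₀, hn₀⟩ := Filter.eventually_atTop.1 ((hnb.eventually_ge_atTop (1 / δ)).and
    (hb0.eventually_lt_const (one_div_pos.2 hΔ)))
  refine ⟨Kmin * δ * c / (l + 1), by positivity, n₀, fun n hn x hx v => ?_⟩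
  obtain ⟨hnβ, hβ⟩ := hn₀ n hn
  have hβΔ : Δ * b n ≤ 1 := by rw [lt_div_iff₀ hΔ] at hβ; linarith
  have hv := dotProduct_self_le_card_mul_norm_sq v
  rw [Fintype.card_fin, Nat.cast_add, Nat.cast_one] at hv
  calc Kmin * δ * c / (l + 1) * (v ⬝ᵥ v) ≤ Kmin * δ * c / (l + 1) * ((l + 1) * ‖v‖ ^ 2) := by
        gcongr
    _ = Kmin * δ * c * ‖v‖ ^ 2 := by field_simp
    _ ≤ _ := mul_norm_sq_le_dotProduct_designMatrix_mulVec hK0 hKΔ hKmin.le hδ hδΔ hnβ hβΔ hx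
        hc.le hcS v

/-- Lower bound on the smallest eigenvalue of the local polynomial design matrix
`B_{nx}`, uniform over `x ∈ [0,1]`, for large `n`, when `b_n → 0` and `n b_n → ∞`. -/
theorem design_matrix_min_eigenvalue (l : ℕ) (K : ℝ → ℝ) (Kmin Δ : ℝ)
    (hKmin : 0 < Kmin) (hΔ : 0 < Δ)
    (hK : ∀ u : ℝ, Kmin * (if |u| ≤ Δ then 1 else 0) ≤ K u)
    (b : ℕ → ℝ) (hbpos : ∀ n, 0 < b n)
    (hb0 : Filter.Tendsto b Filter.atTop (nhds 0))
    (hnb : Filter.Tendsto (fun n : ℕ => (n : ℝ) * b n) Filter.atTop Filter.atTop) :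
    ∃ lam0 > 0, ∃ n0 : ℕ, ∀ n ≥ n0, ∀ x ∈ Set.Icc (0:ℝ) 1,
      ∀ v : Fin (l + 1) → ℝ,
        lam0 * (v ⬝ᵥ v) ≤
          v ⬝ᵥ (((1 / ((n : ℝ) * b n)) •
            ∑ i ∈ Finset.Icc 1 n,
              K (((i : ℝ) / n - x) / b n) •
                Matrix.vecMulVec
                  (fun k : Fin (l + 1) => (((i : ℝ) / n - x) / b n) ^ (k : ℕ) / (Nat.factorial k))
                  (fun k : Fin (l + 1) => (((i : ℝ) / n - x) / b n) ^ (k : ℕ) / (Nat.factorial k))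
            : Matrix (Fin (l + 1)) (Fin (l + 1)) ℝ).mulVec v) :=
  design_matrix_min_eigenvalue_general l K Kmin Δ hKmin hΔ hK b hb0 hnb
end
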